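/- Let X = Σ_{i=1}^n a_i ε_i be a normalized finite Rademacher sum with a_1 ≥ a_2 ≥ ... ≥ a_n > 0 and n ≥ 7. If −a_1 − a_2 + a_3 + a_4 + a_5 + a_6 + a_7 ≥ 0.95 and −a_1 − a_2 − a_3 + a_4 + a_5 + a_6 + a_7 ≥ 0.175, then P(X ≥ 1/√5) ≥ 29/128. -/

import Mathlib

/-!
Split `X = S + T` into the head `S = ∑_{i < 7} a_i ε_i` and the tail `T`. As the weights decrease,
the head pattern negating the `k` largest weights is the worst among those with at most `k`
negative signs, so `S ≥ 0.95` on the 29 head patterns with at most two negative signs and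
`S ≥ 0.175` on the 35 with exactly three. For `t = 1/√5` we have `t - 0.175 ≤ 0.95 - t`, so by
symmetry of `T` the events `T ≥ t - 0.95` and `T ≥ t - 0.175` have probabilities summing to at
least `1`. Pairing each of the 29 patterns with one of the 35 gives `P(X ≥ t) ≥ 29/128`.
-/

open Finset

/-- The probability that a finite Rademacher sum with weights `a` (signs chosen
independently and uniformly from `{-1,+1}`) satisfies the predicate `p`. -/
noncomputable def radProb {ι : Type*} [Fintype ι] (a : ι → ℝ) (p : ℝ → Prop) : ℝ :=
  (Nat.card {ε : ι → Bool | p (∑ i, a i * (if ε i then (1 : ℝ) else -1))}) /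
    2 ^ (Fintype.card ι)

theorem Antitone.sum_le_sum_val_lt_card {n : ℕ} {M : Type*} [AddCommMonoid M] [PartialOrder M]
    [IsOrderedAddMonoid M] {b : Fin n → M} (hb : Antitone b) (s : Finset (Fin n)) :
    ∑ i ∈ s, b i ≤ ∑ i : Fin n with i.val < #s, b i := by
  induction s using Finset.induction_on_max with
  | empty => simp
  | insert x s hlt ih =>
    have hxs : x ∉ s := fun h => lt_irrefl x (hlt x h)
    have hcard : #s ≤ x := by
      simpa using card_le_card (show s ⊆ Iio x from fun y hy => mem_Iio.2 (hlt y hy))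
    have hfirst : univ.filter (fun i : Fin n => i.val < #(insert x s)) =
        insert ⟨#s, by omega⟩ (univ.filter fun i : Fin n => i.val < #s) := by
      ext i
      simp only [card_insert_of_notMem hxs, mem_filter, mem_univ, true_and, mem_insert,
        Fin.ext_iff]
      omega
    rw [sum_insert hxs, hfirst, sum_insert (by simp)]
    exact add_le_add (hb (Fin.le_def.2 hcard)) ih

section Rademacher

variable {ι κ α β : Type*} [Fintype ι] [Fintype κ] [Fintype α] [Fintype β]

def radSum (a : ι → ℝ) (ε : ι → Bool) : ℝ :=
  ∑ i, a i * (if ε i then (1 : ℝ) else -1)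

theorem radProb_eq_card [DecidableEq ι] (a : ι → ℝ) (p : ℝ → Prop) [DecidablePred p] :
    radProb a p = #{ε | p (radSum a ε)} / 2 ^ Fintype.card ι := by
  rw [radProb, Nat.card_coe_set_eq, Set.ncard_eq_toFinset_card', Set.toFinset_ofPred]
  rfl

theorem radProb_nonneg (a : ι → ℝ) (p : ℝ → Prop) : 0 ≤ radProb a p := by
  unfold radProb
  positivity

theorem radProb_mono (a : ι → ℝ) {p q : ℝ → Prop} (hpq : ∀ x, p x → q x) :
    radProb a p ≤ radProb a q := by
  classical
  rw [radProb_eq_card, radProb_eq_card]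
  gcongr
  exact hpq _

theorem radProb_add_radProb_not (a : ι → ℝ) (p : ℝ → Prop) :
    radProb a p + radProb a (fun x => ¬ p x) = 1 := by
  classical
  rw [radProb_eq_card, radProb_eq_card, ← add_div, ← Nat.cast_add,
    card_filter_add_card_filter_not, card_univ, Fintype.card_fun, Fintype.card_bool]
  push_cast
  exact div_self (by positivity)

theorem radSum_not (a : ι → ℝ) (ε : ι → Bool) : radSum a (fun i => !ε i) = -radSum a ε := by
  rw [radSum, radSum, ← sum_neg_distrib]
  refine sum_congr rfl fun i _ => ?_
  cases ε i <;> simp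

theorem radProb_neg (a : ι → ℝ) (p : ℝ → Prop) :
    radProb a (fun x => p (-x)) = radProb a p := by
  classical
  rw [radProb_eq_card, radProb_eq_card]
  congr 2
  refine card_equiv ⟨fun ε i => !ε i, fun ε i => !ε i, fun ε => by simp, fun ε => by simp⟩ ?_
  simp [radSum_not]

theorem one_le_radProb_add_radProb (a : ι → ℝ) {c d : ℝ} (hdc : d ≤ c) :
    1 ≤ radProb a (fun x => -c ≤ x) + radProb a (fun x => d ≤ x) :=
  calc 1 = radProb a (fun x => -c ≤ x) + radProb a (fun x => ¬ -c ≤ -x) := by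
        rw [radProb_neg a (fun x => ¬ -c ≤ x), radProb_add_radProb_not]
    _ ≤ _ := by
        gcongr
        exact radProb_mono a fun x hx => by linarith [not_le.1 hx]

theorem radSum_comp_equiv (e : κ ≃ ι) (a : ι → ℝ) (ε : κ → Bool) :
    radSum (a ∘ e) ε = radSum a (ε ∘ e.symm) := by
  rw [radSum, radSum, ← e.sum_comp]
  simp

theorem radProb_comp_equiv (e : κ ≃ ι) (a : ι → ℝ) (p : ℝ → Prop) :
    radProb (a ∘ e) p = radProb a p := by
  classical
  rw [radProb_eq_card, radProb_eq_card, Fintype.card_congr e]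
  congr 2
  refine card_equiv (e.arrowCongr (Equiv.refl Bool)) fun ε => ?_
  simp only [mem_filter, mem_univ, true_and, radSum_comp_equiv]
  rfl

theorem radSum_sumElim (b : α → ℝ) (w : β → ℝ) (ε : α ⊕ β → Bool) :
    radSum (Sum.elim b w) ε = radSum b (ε ∘ Sum.inl) + radSum w (ε ∘ Sum.inr) :=
  Fintype.sum_sum_type _

theorem radProb_sumElim [DecidableEq α] (b : α → ℝ) (w : β → ℝ) (p : ℝ → Prop) :
    radProb (Sum.elim b w) p =
      (∑ σ, radProb w (fun y => p (radSum b σ + y))) / 2 ^ Fintype.card α := by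
  classical
  have hcount : #{ε | p (radSum (Sum.elim b w) ε)} =
      ∑ σ : α → Bool, #{τ | p (radSum b σ + radSum w τ)} := by
    rw [card_filter, ← (Equiv.sumArrowEquivProdArrow α β Bool).symm.sum_comp,
      Fintype.sum_prod_type]
    refine sum_congr rfl fun σ _ => ?_
    rw [card_filter]
    simp only [radSum_sumElim]
    rfl
  rw [radProb_eq_card, hcount, Nat.cast_sum, Fintype.card_sum, pow_add, mul_comm, ← div_div,
    sum_div]
  simp only [radProb_eq_card]

/-- The tail `w` is symmetric, so it exceeds `t - u` or `t - v` with total probability at least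
one; each head pattern of `A` is then paired with one of `B`. -/
theorem le_radProb_sumElim_of_head_bounds (b : α → ℝ) (w : β → ℝ) {A B : Finset (α → Bool)}
    (hAB : Disjoint A B) (hcard : #A ≤ #B) {t u v : ℝ} (huv : 2 * t ≤ u + v)
    (hA : ∀ σ ∈ A, u ≤ radSum b σ) (hB : ∀ σ ∈ B, v ≤ radSum b σ) :
    #A / 2 ^ Fintype.card α ≤ radProb (Sum.elim b w) (fun x => t ≤ x) := by
  classical
  set f := fun σ => radProb w (fun y => t ≤ radSum b σ + y)
  set qA := radProb w (fun y => -(u - t) ≤ y)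
  set qB := radProb w (fun y => t - v ≤ y)
  have hq : 1 ≤ qA + qB := one_le_radProb_add_radProb w (by linarith)
  have hfA : ∀ σ ∈ A, qA ≤ f σ := fun σ hσ =>
    radProb_mono w fun y hy => by linarith [hA σ hσ]
  have hfB : ∀ σ ∈ B, qB ≤ f σ := fun σ hσ =>
    radProb_mono w fun y hy => by linarith [hB σ hσ]
  rw [radProb_sumElim]
  gcongr
  calc (#A : ℝ) ≤ #A * (qA + qB) := le_mul_of_one_le_right (by positivity) hq
    _ ≤ #A * qA + #B * qB := by
        rw [mul_add]
        gcongr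
        exact radProb_nonneg _ _
    _ = ∑ σ ∈ A, qA + ∑ σ ∈ B, qB := by simp only [sum_const, nsmul_eq_mul]
    _ ≤ ∑ σ ∈ A, f σ + ∑ σ ∈ B, f σ := add_le_add (sum_le_sum hfA) (sum_le_sum hfB)
    _ = ∑ σ ∈ A ∪ B, f σ := (sum_union hAB).symm
    _ ≤ ∑ σ, f σ := sum_le_univ_sum_of_nonneg fun σ => radProb_nonneg _ _

theorem radSum_sub_two_mul_sum_false (a : ι → ℝ) (ε : ι → Bool) :
    radSum a ε = ∑ i, a i - 2 * ∑ i with ε i = false, a i := by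
  rw [sum_filter, mul_sum, ← sum_sub_distrib]
  refine sum_congr rfl fun i _ => ?_
  cases ε i
  · simp only [Bool.false_eq_true, ite_false, ite_true]
    ring
  · simp

def negFirst (n k : ℕ) : Fin n → Bool := fun i => decide (k ≤ i.val)

theorem radSum_negFirst_le {n k : ℕ} {b : Fin n → ℝ} (hb : Antitone b) (hb0 : ∀ i, 0 ≤ b i)
    {σ : Fin n → Bool} (hσ : #{i | σ i = false} ≤ k) :
    radSum b (negFirst n k) ≤ radSum b σ := by
  rw [radSum_sub_two_mul_sum_false, radSum_sub_two_mul_sum_false]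
  have : ∑ i with σ i = false, b i ≤ ∑ i with negFirst n k i = false, b i :=
    calc _ ≤ ∑ i : Fin n with i.val < #{i | σ i = false}, b i := hb.sum_le_sum_val_lt_card _
      _ ≤ _ := sum_le_sum_of_subset_of_nonneg (by intro i; simp [negFirst]; omega)
          fun i _ _ => hb0 i
  linarith

end Rademacher

theorem sqrt5_equality_case (n : ℕ) (hn : 7 ≤ n) (a : Fin n → ℝ)
    (hmono : ∀ i j : Fin n, i ≤ j → a j ≤ a i) (hpos : ∀ i, 0 < a i)
    (h1 : -a ⟨0, by omega⟩ - a ⟨1, by omega⟩ + a ⟨2, by omega⟩ + a ⟨3, by omega⟩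
        + a ⟨4, by omega⟩ + a ⟨5, by omega⟩ + a ⟨6, by omega⟩ ≥ 0.95)
    (h2 : -a ⟨0, by omega⟩ - a ⟨1, by omega⟩ - a ⟨2, by omega⟩ + a ⟨3, by omega⟩
        + a ⟨4, by omega⟩ + a ⟨5, by omega⟩ + a ⟨6, by omega⟩ ≥ 0.175) :
    radProb a (fun x => x ≥ 1 / Real.sqrt 5) ≥ 29 / 128 := by
  obtain ⟨m, rfl⟩ : ∃ m, n = 7 + m := ⟨n - 7, by omega⟩
  set b : Fin 7 → ℝ := fun i => a ⟨i, by omega⟩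
  have hb : Antitone b := fun i j hij => hmono _ _ hij
  have hb0 : ∀ i, 0 ≤ b i := fun i => (hpos _).le
  have hsplit : a = Sum.elim b (fun j => a (Fin.natAdd 7 j)) ∘ finSumFinEquiv.symm := by
    ext i
    induction i using Fin.addCases with
    | left i => simp [b]; rfl
    | right j => simp
  have ht : 2 * (1 / Real.sqrt 5) ≤ 0.95 + 0.175 := by
    have : 1 / Real.sqrt 5 ≤ 1 / 2 :=
      one_div_le_one_div_of_le two_pos (Real.le_sqrt_of_sq_le (by norm_num))
    linarith
  have hA : ∀ σ ∈ ({σ | #{i | σ i = false} ≤ 2} : Finset (Fin 7 → Bool)), 0.95 ≤ radSum b σ :=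
    fun σ hσ => le_trans (by simp [radSum, negFirst, Fin.sum_univ_seven, b] at h1 ⊢; linarith)
      (radSum_negFirst_le hb hb0 (mem_filter.1 hσ).2)
  have hB : ∀ σ ∈ ({σ | #{i | σ i = false} = 3} : Finset (Fin 7 → Bool)), 0.175 ≤ radSum b σ :=
    fun σ hσ => le_trans (by simp [radSum, negFirst, Fin.sum_univ_seven, b] at h2 ⊢; linarith)
      (radSum_negFirst_le hb hb0 (mem_filter.1 hσ).2.le)
  rw [hsplit, radProb_comp_equiv, ge_iff_le]
  calc (29 / 128 : ℝ) = #({σ | #{i | σ i = false} ≤ 2} : Finset (Fin 7 → Bool)) / 2 ^ 7 := by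
        rw [show #({σ | #{i | σ i = false} ≤ 2} : Finset (Fin 7 → Bool)) = 29 by decide]
        norm_num
    _ ≤ _ := le_radProb_sumElim_of_head_bounds _ _
          (disjoint_filter.2 fun σ _ hle heq => by omega) (by decide) ht hA hB
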